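/- Let q be an odd prime power and F_q the field with q elements. Let U ⊆ SL₂(F_q) be the subgroup of upper unitriangular matrices [[1,x],[0,1]] (x ∈ F_q) and let s = [[0,−1],[1,0]] ∈ SL₂(F_q). Set g = [[1,0],[1,1]]. Then: (a) g lies in the double coset U s U (indeed g = u s u with u = [[1,1],[0,1]]); and (b) for any nonsquare ξ ∈ F_q^×, no SL₂(F_q)-conjugate of g' = [[1,0],[ξ,1]] lies in U s U. Consequently, the conjugacy class of g is the unique SL₂(F_q)-conjugacy class of nonidentity unipotent elements having nonempty intersection with U s U. -/

import Mathlib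

/-!
Every element of `U s U` has lower-left entry `1`. By Cayley–Hamilton, `(A - 1)² = (tr A - 2) A`
for `A ∈ SL₂`, so a unipotent element has trace `2`, and traces are conjugation invariant. A
trace-`2` matrix with lower-left entry `1` is a unitriangular conjugate of `g`. On the other hand
`h g' h⁻¹` has lower-left entry `ξ h₁₁²`, which is `1` only when `ξ` is a square.
-/

/-- `g = [[1,0],[1,1]] ∈ SL₂(F)`. -/
def regUnip (F : Type*) [Field F] : Matrix.SpecialLinearGroup (Fin 2) F :=
  ⟨!![1, 0; 1, 1], by simp [Matrix.det_fin_two_of]⟩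

/-- `g' = [[1,0],[ξ,1]] ∈ SL₂(F)`. -/
def regUnip' {F : Type*} [Field F] (ξ : F) : Matrix.SpecialLinearGroup (Fin 2) F :=
  ⟨!![1, 0; ξ, 1], by simp [Matrix.det_fin_two_of]⟩

/-- `s = [[0,-1],[1,0]] ∈ SL₂(F)`. -/
def coxEl (F : Type*) [Field F] : Matrix.SpecialLinearGroup (Fin 2) F :=
  ⟨!![0, -1; 1, 0], by simp [Matrix.det_fin_two_of]⟩

/-- `u = [[1,1],[0,1]] ∈ SL₂(F)`. -/
def uEl (F : Type*) [Field F] : Matrix.SpecialLinearGroup (Fin 2) F :=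
  ⟨!![1, 1; 0, 1], by simp [Matrix.det_fin_two_of]⟩

/-- The subgroup (as a set) of upper unitriangular matrices in `SL₂(F)`. -/
def upperUnitriSet (F : Type*) [Field F] : Set (Matrix.SpecialLinearGroup (Fin 2) F) :=
  {M | ∃ x : F, (M : Matrix (Fin 2) (Fin 2) F) = !![1, x; 0, 1]}

/-- The double coset `U s U` in `SL₂(F)`. -/
def UsU (F : Type*) [Field F] : Set (Matrix.SpecialLinearGroup (Fin 2) F) :=
  {m | ∃ u₁ ∈ upperUnitriSet F, ∃ u₂ ∈ upperUnitriSet F, m = u₁ * coxEl F * u₂}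

open Matrix
open scoped MatrixGroups

namespace Matrix.SpecialLinearGroup

variable {n R : Type*} [Fintype n] [DecidableEq n] [CommRing R]

theorem trace_eq_of_isConj {A B : SpecialLinearGroup n R} (h : IsConj A B) :
    trace (A : Matrix n n R) = trace (B : Matrix n n R) := by
  obtain ⟨C, rfl⟩ := isConj_iff.1 h
  rw [coe_mul, coe_mul, trace_mul_cycle, ← coe_mul, inv_mul_cancel, coe_one, one_mul]

theorem sq_coe_sub_one (A : SL(2, R)) :
    ((A : Matrix (Fin 2) (Fin 2) R) - 1) ^ 2 = (trace (A : Matrix (Fin 2) (Fin 2) R) - 2) • A := by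
  induction A using fin_two_induction with | h a b c d hdet =>
  ext i j
  fin_cases i <;> fin_cases j <;>
    simp [sq, mul_apply, Fin.sum_univ_two, trace_fin_two] <;> grind

theorem trace_eq_two_of_sq_coe_sub_one_eq_zero [IsDomain R] (A : SL(2, R))
    (h : ((A : Matrix (Fin 2) (Fin 2) R) - 1) ^ 2 = 0) :
    trace (A : Matrix (Fin 2) (Fin 2) R) = 2 := by
  rw [sq_coe_sub_one, smul_eq_zero] at h
  rcases h with h | h
  · exact sub_eq_zero.1 h
  · simpa [h] using A.2

def upperUnitri (x : R) : SL(2, R) :=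
  ⟨!![1, x; 0, 1], by simp [det_fin_two_of]⟩

section SL2

variable {F : Type*} [Field F]

local notation:1024 "↑ₘ" A:1024 => ((A : SL(2, F)) : Matrix (Fin 2) (Fin 2) F)

theorem coe_mul_coxEl_mul_apply_one_zero {u₁ u₂ : SL(2, F)} (hu₁ : u₁ ∈ upperUnitriSet F)
    (hu₂ : u₂ ∈ upperUnitriSet F) : ↑ₘ(u₁ * coxEl F * u₂) 1 0 = 1 := by
  obtain ⟨x, hx⟩ := hu₁
  obtain ⟨y, hy⟩ := hu₂
  simp only [coe_mul]
  simp [hx, hy, coxEl, mul_apply, Fin.sum_univ_two]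

theorem apply_one_zero_of_mem_UsU {m : SL(2, F)} (hm : m ∈ UsU F) : ↑ₘm 1 0 = 1 := by
  obtain ⟨u₁, hu₁, u₂, hu₂, rfl⟩ := hm
  exact coe_mul_coxEl_mul_apply_one_zero hu₁ hu₂

theorem conj_regUnip'_apply_one_zero (h : SL(2, F)) (ξ : F) :
    ↑ₘ(h * regUnip' ξ * h⁻¹) 1 0 = ξ * h 1 1 ^ 2 := by
  simp only [coe_mul, coe_inv, adjugate_fin_two]
  simp only [regUnip', mul_apply, Fin.sum_univ_two, of_apply, cons_val', cons_val_zero,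
    cons_val_one, cons_val_fin_one]
  ring

theorem isSquare_of_conj_regUnip'_mem_UsU {h : SL(2, F)} {ξ : F}
    (hmem : h * regUnip' ξ * h⁻¹ ∈ UsU F) : IsSquare ξ := by
  have hξd : ξ * h 1 1 ^ 2 = 1 := by
    rw [← conj_regUnip'_apply_one_zero, apply_one_zero_of_mem_UsU hmem]
  have hd : h 1 1 ≠ 0 := by
    intro hd
    simp [hd] at hξd
  exact ⟨(h 1 1)⁻¹, by field_simp; linear_combination hξd⟩

theorem isConj_regUnip_of_apply_one_zero_of_trace {x : SL(2, F)} (h10 : x 1 0 = 1)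
    (htr : trace (x : Matrix (Fin 2) (Fin 2) F) = 2) : IsConj (regUnip F) x := by
  induction x using fin_two_induction with | h a b c d hdet =>
  obtain rfl : c = 1 := h10
  obtain rfl : d = 2 - a := by rw [trace_fin_two_of] at htr; linear_combination htr
  -- `upperUnitri t` conjugates `g` to `!![1 + t, -t ^ 2; 1, 1 - t]`.
  refine isConj_iff.2 ⟨upperUnitri (a - 1), ?_⟩
  ext i j
  simp only [coe_mul, coe_inv, adjugate_fin_two]
  fin_cases i <;> fin_cases j <;> simp [upperUnitri, regUnip, mul_apply, Fin.sum_univ_two] <;> grind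

theorem regUnip_eq_uEl_mul_coxEl_mul_uEl : regUnip F = uEl F * coxEl F * uEl F := by
  ext i j
  simp only [coe_mul]
  fin_cases i <;> fin_cases j <;> simp [regUnip, uEl, coxEl, mul_apply, Fin.sum_univ_two]

end SL2

end Matrix.SpecialLinearGroup

open Matrix.SpecialLinearGroup in
theorem regUnip_class_unique_meeting_UsU_general (F : Type*) [Field F] (ξ : F) (hξ : ¬ IsSquare ξ) :
    (uEl F ∈ upperUnitriSet F ∧ regUnip F = uEl F * coxEl F * uEl F ∧
      regUnip F ∈ UsU F) ∧
    (∀ h : Matrix.SpecialLinearGroup (Fin 2) F, h * regUnip' ξ * h⁻¹ ∉ UsU F) ∧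
    (∀ M : Matrix.SpecialLinearGroup (Fin 2) F,
      ((M : Matrix (Fin 2) (Fin 2) F) - 1) ^ 2 = 0 → M ≠ 1 →
        ((∃ x ∈ UsU F, IsConj M x) ↔ IsConj (regUnip F) M)) := by
  have huU : uEl F ∈ upperUnitriSet F := ⟨1, rfl⟩
  have hgU : regUnip F ∈ UsU F := ⟨_, huU, _, huU, regUnip_eq_uEl_mul_coxEl_mul_uEl⟩
  refine ⟨⟨huU, regUnip_eq_uEl_mul_coxEl_mul_uEl, hgU⟩,
    fun h hmem ↦ hξ (isSquare_of_conj_regUnip'_mem_UsU hmem),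
    fun M hM _ ↦ ⟨?_, fun hgM ↦ ⟨regUnip F, hgU, hgM.symm⟩⟩⟩
  rintro ⟨x, hxU, hMx⟩
  have htr : trace (x : Matrix (Fin 2) (Fin 2) F) = 2 :=
    (trace_eq_of_isConj hMx).symm.trans (trace_eq_two_of_sq_coe_sub_one_eq_zero M hM)
  exact (isConj_regUnip_of_apply_one_zero_of_trace (apply_one_zero_of_mem_UsU hxU) htr).trans
    hMx.symm

/-- For `q` an odd prime power, `F` the field with `q` elements:
(a) `g = [[1,0],[1,1]]` lies in `U s U`, indeed `g = u s u` with
`u = [[1,1],[0,1]]`; (b) for any nonsquare `ξ ∈ F^×`, no `SL₂(F)`-conjugate of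
`g' = [[1,0],[ξ,1]]` lies in `U s U`; consequently, the conjugacy class of `g`
is the unique `SL₂(F)`-conjugacy class of nonidentity unipotent elements
meeting `U s U`. -/
theorem regUnip_class_unique_meeting_UsU (q : ℕ) (hq : Odd q)
    (F : Type*) [Field F] [Fintype F] (hcard : Fintype.card F = q)
    (ξ : F) (hξ0 : ξ ≠ 0) (hξ : ¬ IsSquare ξ) :
    (uEl F ∈ upperUnitriSet F ∧ regUnip F = uEl F * coxEl F * uEl F ∧
      regUnip F ∈ UsU F) ∧
    (∀ h : Matrix.SpecialLinearGroup (Fin 2) F, h * regUnip' ξ * h⁻¹ ∉ UsU F) ∧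
    (∀ M : Matrix.SpecialLinearGroup (Fin 2) F,
      ((M : Matrix (Fin 2) (Fin 2) F) - 1) ^ 2 = 0 → M ≠ 1 →
        ((∃ x ∈ UsU F, IsConj M x) ↔ IsConj (regUnip F) M)) :=
  regUnip_class_unique_meeting_UsU_general F ξ hξ
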